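/- arXiv:2307.03283 — 5 statements merged into one kernel-verified Lean document; each statement's English description precedes it below -/
import Mathlib

section
/- Let T be a rooted binary tree whose nodes are labeled by vertex subsets of a graph G such that the root is labeled V, and each internal node U has two children U₀, U₁ that are disjoint subsets of U with |U₀|, |U₁| ≤ (2/3)|U|. Then for any real r > 0, the nodes whose label sizes lie in the interval (2r/3, r] are pairwise disjoint, and hence there are at most 3n/(2r) such nodes, where n = |V|. -/
open scoped Classical ComplexOrder
open Finset

/-- Outer boundary: vertices outside `U` adjacent to some vertex of `U`. -/
noncomputable def outerBoundary {V : Type*} [Fintype V] (G : SimpleGraph V) (U : Finset V) :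
    Finset V :=
  Finset.univ.filter fun v => v ∉ U ∧ ∃ u ∈ U, G.Adj u v

/-- Inner boundary: vertices of `U` adjacent to some vertex outside `U`. -/
noncomputable def innerBoundary {V : Type*} [Fintype V] (G : SimpleGraph V) (U : Finset V) :
    Finset V :=
  Finset.univ.filter fun u => u ∈ U ∧ ∃ v, v ∉ U ∧ G.Adj u v

/-- Two vertex sets are disconnected: no edge of `G` joins them. -/
def Disconn {V : Type*} (G : SimpleGraph V) (A B : Finset V) : Prop :=
  ∀ a ∈ A, ∀ b ∈ B, ¬ G.Adj a b

/-- A `d`-correctable family of a graph `G`: closed under subsets (Trivial), contains all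
sets of size `< d` (Distance), closed under unions of pairwise disjoint pairwise
disconnected members (Union), and closed under expansion (Expansion). -/
def IsCorrectableFamily {V : Type*} [Fintype V] [DecidableEq V] (G : SimpleGraph V) (d : ℕ)
    (F : Set (Finset V)) : Prop :=
  (∀ U ∈ F, ∀ W ⊆ U, W ∈ F) ∧
  (∀ U : Finset V, U.card < d → U ∈ F) ∧
  (∀ (ℓ : ℕ) (U : Fin ℓ → Finset V), (∀ i, U i ∈ F) →
    (∀ i j, i ≠ j → Disjoint (U i) (U j) ∧ Disconn G (U i) (U j)) →
    Finset.univ.biUnion U ∈ F) ∧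
  (∀ U ∈ F, ∀ T ∈ F, outerBoundary G U ⊆ T → U ∪ T ∈ F)

/-- A set is `d`-correctable with respect to `G` if it belongs to every
`d`-correctable family of `G`. -/
def IsCorrectableSet {V : Type*} [Fintype V] [DecidableEq V] (G : SimpleGraph V) (d : ℕ)
    (U : Finset V) : Prop :=
  ∀ F : Set (Finset V), IsCorrectableFamily G d F → U ∈ F

/-- The (induced subgraph on) `H` admits a 2/3-balanced separator of size at most `t`. -/
def SepUpTo {V : Type*} [DecidableEq V] (G : SimpleGraph V) (H : Finset V) (t : ℝ) : Prop :=
  ∃ T U₁ U₂ : Finset V, T ∪ U₁ ∪ U₂ = H ∧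
    Disjoint T U₁ ∧ Disjoint T U₂ ∧ Disjoint U₁ U₂ ∧
    Disconn G U₁ U₂ ∧
    3 * U₁.card ≤ 2 * H.card ∧ 3 * U₂.card ≤ 2 * H.card ∧
    (T.card : ℝ) ≤ t

/-- `G` has separation profile `s_G(r) ≤ β · r^c` for all `r`: every vertex subset `H`
admits a 2/3-balanced separator of size at most `β · |H|^c`. -/
def HasSepProfile {V : Type*} [DecidableEq V] (G : SimpleGraph V) (β c : ℝ) : Prop :=
  ∀ H : Finset V, SepUpTo G H (β * (H.card : ℝ) ^ c)

/-- `A` is a union of pairwise disjoint, pairwise disconnected components,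
each of size at most `d - 1`. -/
def SmallComponents {V : Type*} [DecidableEq V] (G : SimpleGraph V) (d : ℕ)
    (A : Finset V) : Prop :=
  ∃ (ℓ : ℕ) (U : Fin ℓ → Finset V), A = Finset.univ.biUnion U ∧
    (∀ i, (U i).card < d) ∧
    ∀ i j, i ≠ j → Disjoint (U i) (U j) ∧ Disconn G (U i) (U j)

/-! Labels shrink along branches and the two children of a node have disjoint labels, so nodes
on different branches have disjoint labels. Below a node of size at most `r` every label has size
at most `2r/3`, so two distinct nodes with sizes in `(2r/3, r]` lie on different branches. The
labels of these nodes are thus disjoint subsets of `V`, each with more than `2r/3` elements. -/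

theorem List.exists_append_singleton_prefix_of_not_prefix {α : Type*} :
    ∀ {l l' : List α}, ¬ l <+: l' → ¬ l' <+: l →
      ∃ (p : List α) (b b' : α), b ≠ b' ∧ p ++ [b] <+: l ∧ p ++ [b'] <+: l'
  | [], _, h, _ => absurd List.nil_prefix h
  | _ :: _, [], _, h' => absurd List.nil_prefix h'
  | a :: t, a' :: t', h, h' => by
    by_cases hab : a = a'
    · subst hab
      obtain ⟨p, b, b', hne, hp, hp'⟩ := exists_append_singleton_prefix_of_not_prefix
        (fun hp => h (List.cons_prefix_cons.mpr ⟨rfl, hp⟩))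
        (fun hp => h' (List.cons_prefix_cons.mpr ⟨rfl, hp⟩))
      exact ⟨a :: p, b, b', hne, List.cons_prefix_cons.mpr ⟨rfl, hp⟩,
        List.cons_prefix_cons.mpr ⟨rfl, hp'⟩⟩
    · exact ⟨[], a, a', hab, ⟨t, rfl⟩, ⟨t', rfl⟩⟩

theorem Finset.card_mul_le_fintypeCard_of_pairwiseDisjoint {ι α : Type*} [Fintype α]
    {S : Finset ι} {f : ι → Finset α} (hS : (S : Set ι).PairwiseDisjoint f) {m : ℝ}
    (hm : ∀ i ∈ S, m ≤ (f i).card) : (S.card : ℝ) * m ≤ Fintype.card α := by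
  classical
  calc (S.card : ℝ) * m = ∑ _ ∈ S, m := by rw [sum_const, nsmul_eq_mul]
    _ ≤ ∑ i ∈ S, ((f i).card : ℝ) := sum_le_sum hm
    _ = (S.biUnion f).card := by rw [card_biUnion hS]; push_cast; rfl
    _ ≤ Fintype.card α := by exact_mod_cast card_le_univ _

section LabelledTree

variable {V : Type*} {N : Finset (List Bool)} {L : List Bool → Finset V}

theorem label_subset_of_prefix_mem
    (hclosed : ∀ l ∈ N, ∀ l' : List Bool, l' <+: l → l' ∈ N)
    (hsub : ∀ (l : List Bool) (b : Bool), l ++ [b] ∈ N → L (l ++ [b]) ⊆ L l)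
    (p t : List Bool) (ht : p ++ t ∈ N) : L (p ++ t) ⊆ L p := by
  induction t using List.reverseRecOn with
  | nil => simp
  | append_singleton t b ih =>
    rw [← List.append_assoc] at ht ⊢
    exact (hsub _ b ht).trans (ih (hclosed _ ht _ ⟨[b], rfl⟩))

theorem three_mul_card_label_le_of_prefix
    (hclosed : ∀ l ∈ N, ∀ l' : List Bool, l' <+: l → l' ∈ N)
    (hsub : ∀ (l : List Bool) (b : Bool), l ++ [b] ∈ N → L (l ++ [b]) ⊆ L l)
    (hsize : ∀ (l : List Bool) (b : Bool), l ++ [b] ∈ N →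
      3 * (L (l ++ [b])).card ≤ 2 * (L l).card)
    {l l' : List Bool} (hl' : l' ∈ N) (hpre : l <+: l') (hne : l ≠ l') :
    3 * (L l').card ≤ 2 * (L l).card := by
  obtain ⟨_ | ⟨b, t⟩, rfl⟩ := hpre
  · simp at hne
  · have hdesc : l ++ [b] ++ t ∈ N := by simpa using hl'
    have hchild_le := hsize l b (hclosed _ hdesc _ ⟨t, rfl⟩)
    have hdesc_le : (L (l ++ b :: t)).card ≤ (L (l ++ [b])).card := by
      simpa using card_le_card (label_subset_of_prefix_mem hclosed hsub _ _ hdesc)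
    omega

theorem disjoint_label_of_not_prefix
    (hclosed : ∀ l ∈ N, ∀ l' : List Bool, l' <+: l → l' ∈ N)
    (hsub : ∀ (l : List Bool) (b : Bool), l ++ [b] ∈ N → L (l ++ [b]) ⊆ L l)
    (hdisj : ∀ l : List Bool, l ++ [false] ∈ N → l ++ [true] ∈ N →
      Disjoint (L (l ++ [false])) (L (l ++ [true])))
    {l l' : List Bool} (hl : l ∈ N) (hl' : l' ∈ N) (h : ¬ l <+: l') (h' : ¬ l' <+: l) :
    Disjoint (L l) (L l') := by
  have key : ∀ {l l' : List Bool} (p : List Bool), l ∈ N → l' ∈ N →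
      p ++ [false] <+: l → p ++ [true] <+: l' → Disjoint (L l) (L l') := by
    rintro l l' p hl hl' ⟨t, rfl⟩ ⟨t', rfl⟩
    exact (hdisj p (hclosed _ hl _ ⟨t, rfl⟩) (hclosed _ hl' _ ⟨t', rfl⟩)).mono
      (label_subset_of_prefix_mem hclosed hsub _ _ hl)
      (label_subset_of_prefix_mem hclosed hsub _ _ hl')
  obtain ⟨p, b, b', hbb', hp, hp'⟩ := List.exists_append_singleton_prefix_of_not_prefix h h'
  cases b <;> cases b' <;> first
    | exact absurd rfl hbb'
    | exact key p hl hl' hp hp'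
    | exact (key p hl' hl hp' hp).symm

end LabelledTree

theorem tree_level_counting_general {V : Type*} [Fintype V] [DecidableEq V]
    (N : Finset (List Bool)) (L : List Bool → Finset V)
    (hclosed : ∀ l ∈ N, ∀ l' : List Bool, l' <+: l → l' ∈ N)
    (hsub : ∀ (l : List Bool) (b : Bool), l ++ [b] ∈ N → L (l ++ [b]) ⊆ L l)
    (hdisj : ∀ l : List Bool, l ++ [false] ∈ N → l ++ [true] ∈ N →
      Disjoint (L (l ++ [false])) (L (l ++ [true])))
    (hsize : ∀ (l : List Bool) (b : Bool), l ++ [b] ∈ N →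
      3 * (L (l ++ [b])).card ≤ 2 * (L l).card)
    (r : ℝ) (hr : 0 < r) :
    (∀ l ∈ N, ∀ l' ∈ N, l ≠ l' →
      2 * r / 3 < ((L l).card : ℝ) → ((L l).card : ℝ) ≤ r →
      2 * r / 3 < ((L l').card : ℝ) → ((L l').card : ℝ) ≤ r →
      Disjoint (L l) (L l')) ∧
    (((N.filter fun l => 2 * r / 3 < ((L l).card : ℝ) ∧ ((L l).card : ℝ) ≤ r).card : ℝ)
      ≤ 3 * (Fintype.card V) / (2 * r)) := by
  have hshrink {l l' : List Bool} (hl' : l' ∈ N) (hpre : l <+: l') (hne : l ≠ l') :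
      3 * ((L l').card : ℝ) ≤ 2 * (L l).card := by
    exact_mod_cast three_mul_card_label_le_of_prefix hclosed hsub hsize hl' hpre hne
  have hlevel : ∀ l ∈ N, ∀ l' ∈ N, l ≠ l' →
      2 * r / 3 < ((L l).card : ℝ) → ((L l).card : ℝ) ≤ r →
      2 * r / 3 < ((L l').card : ℝ) → ((L l').card : ℝ) ≤ r →
      Disjoint (L l) (L l') := by
    intro l hl l' hl' hne hl_gt hl_le hl'_gt hl'_le
    refine disjoint_label_of_not_prefix hclosed hsub hdisj hl hl' (fun hpre => ?_) (fun hpre => ?_)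
    · linarith [hshrink hl' hpre hne]
    · linarith [hshrink hl hpre hne.symm]
  refine ⟨hlevel, ?_⟩
  have hcount := card_mul_le_fintypeCard_of_pairwiseDisjoint (f := L) (m := 2 * r / 3)
    (S := N.filter fun l => 2 * r / 3 < ((L l).card : ℝ) ∧ ((L l).card : ℝ) ≤ r)
    (fun l hl l' hl' hne => by
      rw [mem_coe, mem_filter] at hl hl'
      exact hlevel l hl.1 l' hl'.1 hne hl.2.1 hl.2.2 hl'.2.1 hl'.2.2)
    (fun l hl => (mem_filter.1 hl).2.1.le)
  rw [le_div_iff₀ (by positivity)]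
  linarith

/-- In a rooted binary tree of vertex subsets (root labeled `V`, children
disjoint subsets of their parent, each of size at most `2/3` of the parent), for any real
`r > 0`, the nodes labeled by sets of size in `(2r/3, r]` have pairwise disjoint labels,
and there are at most `3n/(2r)` such nodes. -/
theorem tree_level_counting {V : Type*} [Fintype V] [DecidableEq V]
    (N : Finset (List Bool)) (L : List Bool → Finset V)
    (hroot : ([] : List Bool) ∈ N) (hrootL : L [] = Finset.univ)
    (hclosed : ∀ l ∈ N, ∀ l' : List Bool, l' <+: l → l' ∈ N)
    (hsub : ∀ (l : List Bool) (b : Bool), l ++ [b] ∈ N → L (l ++ [b]) ⊆ L l)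
    (hdisj : ∀ l : List Bool, l ++ [false] ∈ N → l ++ [true] ∈ N →
      Disjoint (L (l ++ [false])) (L (l ++ [true])))
    (hsize : ∀ (l : List Bool) (b : Bool), l ++ [b] ∈ N →
      3 * (L (l ++ [b])).card ≤ 2 * (L l).card)
    (r : ℝ) (hr : 0 < r) :
    (∀ l ∈ N, ∀ l' ∈ N, l ≠ l' →
      2 * r / 3 < ((L l).card : ℝ) → ((L l).card : ℝ) ≤ r →
      2 * r / 3 < ((L l').card : ℝ) → ((L l').card : ℝ) ≤ r →
      Disjoint (L l) (L l')) ∧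
    (((N.filter fun l => 2 * r / 3 < ((L l).card : ℝ) ∧ ((L l).card : ℝ) ≤ r).card : ℝ)
      ≤ 3 * (Fintype.card V) / (2 * r)) :=
  tree_level_counting_general N L hclosed hsub hdisj hsize r hr
end

section
/- Let β ≥ 1 and c ∈ (0,1) be constants. There exists a constant α = α(β,c) > 0 such that for all positive integers n ≥ d, any graph G on n vertices with separation profile s_G(r) ≤ β·r^c for all r contains a vertex subset A that is a union of pairwise disjoint, pairwise disconnected components each of size at most d−1, with |V∖A| ≤ α·n/d^(1−c). -/
open scoped Classical ComplexOrder
open Finset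

open Real

lemma smallComponents_empty {V : Type*} [DecidableEq V] (G : SimpleGraph V) (d : ℕ) :
    SmallComponents G d (∅ : Finset V) := by
  refine ⟨0, fun i => ∅, by simp, fun i => i.elim0, fun i => i.elim0⟩

lemma smallComponents_single {V : Type*} [DecidableEq V] (G : SimpleGraph V) (d : ℕ)
    (H : Finset V) (h : H.card < d) : SmallComponents G d H := by
  refine ⟨1, fun _ => H, by simp, fun _ => h, fun i j hij => absurd (Subsingleton.elim i j) hij⟩

lemma disconn_mono {V : Type*} (G : SimpleGraph V) {A B P Q : Finset V}
    (hA : A ⊆ P) (hB : B ⊆ Q) (h : Disconn G P Q) : Disconn G A B :=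
  fun a ha b hb => h a (hA ha) b (hB hb)

lemma smallComponents_union {V : Type*} [DecidableEq V] (G : SimpleGraph V) (d : ℕ)
    {A B P Q : Finset V} (hA : A ⊆ P) (hB : B ⊆ Q) (hPQ : Disjoint P Q)
    (hD : Disconn G P Q) (h1 : SmallComponents G d A) (h2 : SmallComponents G d B) :
    SmallComponents G d (A ∪ B) := by
  obtain ⟨ℓ₁, U₁, hU₁, hc₁, hp₁⟩ := h1
  obtain ⟨ℓ₂, U₂, hU₂, hc₂, hp₂⟩ := h2
  have hsub₁ : ∀ k, U₁ k ⊆ A := fun k => hU₁ ▸ Finset.subset_biUnion_of_mem U₁ (mem_univ k)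
  have hsub₂ : ∀ k, U₂ k ⊆ B := fun k => hU₂ ▸ Finset.subset_biUnion_of_mem U₂ (mem_univ k)
  refine ⟨ℓ₁ + ℓ₂, fun i => if h : (i : ℕ) < ℓ₁ then U₁ ⟨i, h⟩ else
      U₂ ⟨(i : ℕ) - ℓ₁, by omega⟩, ?_, ?_, ?_⟩
  · ext x
    simp only [Finset.mem_union, Finset.mem_biUnion, mem_univ, true_and]
    constructor
    · rintro (hx | hx)
      · rw [hU₁] at hx
        simp only [Finset.mem_biUnion, mem_univ, true_and] at hx
        obtain ⟨k, hk⟩ := hx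
        exact ⟨⟨k, by omega⟩, by simp [k.isLt, hk]⟩
      · rw [hU₂] at hx
        simp only [Finset.mem_biUnion, mem_univ, true_and] at hx
        obtain ⟨k, hk⟩ := hx
        refine ⟨⟨ℓ₁ + k, by omega⟩, ?_⟩
        have : ¬ (ℓ₁ + (k:ℕ) < ℓ₁) := by omega
        simp only [this, dif_neg, not_false_iff]
        have : ℓ₁ + (k:ℕ) - ℓ₁ = k := by omega
        simpa [this] using hk
    · rintro ⟨i, hi⟩
      by_cases h : (i : ℕ) < ℓ₁
      · simp only [h, dif_pos] at hi
        exact Or.inl (hU₁ ▸ Finset.mem_biUnion.2 ⟨⟨i, h⟩, mem_univ _, hi⟩)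
      · simp only [h, dif_neg, not_false_iff] at hi
        exact Or.inr (hU₂ ▸ Finset.mem_biUnion.2 ⟨_, mem_univ _, hi⟩)
  · intro i
    by_cases h : (i : ℕ) < ℓ₁ <;> simp only [h, dif_pos, dif_neg, not_false_iff]
    · exact hc₁ _
    · exact hc₂ _
  · intro i j hij
    by_cases h : (i : ℕ) < ℓ₁ <;> by_cases h' : (j : ℕ) < ℓ₁ <;>
      simp only [h, h', dif_pos, dif_neg, not_false_iff]
    · refine hp₁ ⟨i, h⟩ ⟨j, h'⟩ ?_
      intro hcon; apply hij; exact Fin.ext (by simpa using congrArg Fin.val hcon)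
    · exact ⟨hPQ.mono ((hsub₁ _).trans hA) ((hsub₂ _).trans hB),
        disconn_mono G ((hsub₁ _).trans hA) ((hsub₂ _).trans hB) hD⟩
    · refine ⟨(hPQ.mono ((hsub₁ _).trans hA) ((hsub₂ _).trans hB)).symm, ?_⟩
      intro a ha b hb hab
      exact disconn_mono G ((hsub₁ _).trans hA) ((hsub₂ _).trans hB) hD b hb a ha hab.symm
    · refine hp₂ _ _ ?_
      intro hcon; apply hij
      have := congrArg Fin.val hcon
      simp only at this
      exact Fin.ext (by omega)

noncomputable def Fcost (α γ c : ℝ) (d m : ℕ) : ℝ :=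
  if m < d then 0 else α * m / (d:ℝ)^((1:ℝ)-c) - γ * (m:ℝ)^c

lemma rpow_mul_le {c : ℝ} (hc0 : 0 < c) (hc1 : c < 1) {d m : ℕ} (hd : 1 ≤ d) (hm : d ≤ m) :
    (m:ℝ)^c * (d:ℝ)^((1:ℝ)-c) ≤ (m:ℝ) := by
  have hm1 : (1:ℝ) ≤ (m:ℝ) := by exact_mod_cast hd.trans hm
  have hdm : (d:ℝ) ≤ (m:ℝ) := by exact_mod_cast hm
  have h1 : (d:ℝ)^((1:ℝ)-c) ≤ (m:ℝ)^((1:ℝ)-c) :=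
    Real.rpow_le_rpow (by positivity) hdm (by linarith)
  have h2 : (m:ℝ)^c * (m:ℝ)^((1:ℝ)-c) = (m:ℝ) := by
    rw [← Real.rpow_add (by linarith)]; simp
  calc (m:ℝ)^c * (d:ℝ)^((1:ℝ)-c) ≤ (m:ℝ)^c * (m:ℝ)^((1:ℝ)-c) := by
        apply mul_le_mul_of_nonneg_left h1 (by positivity)
    _ = (m:ℝ) := h2

lemma Fcost_le {α γ c : ℝ} (d m : ℕ) (hα : 0 ≤ α) (hγ : 0 ≤ γ) (hc : 0 < c)
    (hD : (0:ℝ) < (d:ℝ)^((1:ℝ)-c)) :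
    Fcost α γ c d m ≤ α * m / (d:ℝ)^((1:ℝ)-c) := by
  unfold Fcost
  split_ifs with h
  · positivity
  · have : 0 ≤ γ * (m:ℝ)^c := by positivity
    linarith

lemma rpow_split {x : ℝ} (hx : 0 < x) (c : ℝ) : x^c = x * x^(c-1) := by
  nth_rewrite 1 [show c = 1 + (c-1) by ring]
  rw [Real.rpow_add hx, Real.rpow_one]

set_option maxHeartbeats 2000000 in
lemma key_aux (β c δ₀ ε γ α : ℝ) (hβ : 1 ≤ β) (hc0 : 0 < c) (hc1 : c < 1)
    (hδ : 0 < δ₀) (h4δ : 4 * δ₀ ≤ (2:ℝ)^((1:ℝ)-c) - 1)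
    (hε : 0 < ε) (hε1 : ε ≤ 1/12) (hε2 : ε ≤ δ₀/4)
    (hγ : 0 ≤ γ) (hγδ : 2*β ≤ γ*δ₀) (hα : 0 ≤ α) (hαε : β + γ ≤ α*ε)
    (d t m₁ m₂ : ℕ) (hd : 1 ≤ d) (hm : d ≤ t + m₁ + m₂)
    (hb1 : 3*m₁ ≤ 2*(t+m₁+m₂)) (hb2 : 3*m₂ ≤ 2*(t+m₁+m₂))
    (ht : (t:ℝ) ≤ β * ((t+m₁+m₂ : ℕ):ℝ)^c) (hord : m₂ ≤ m₁) :
    (t:ℝ) + Fcost α γ c d m₁ + Fcost α γ c d m₂ ≤ Fcost α γ c d (t+m₁+m₂) := by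
  set m : ℕ := t + m₁ + m₂ with hmdef
  set D : ℝ := (d:ℝ)^((1:ℝ)-c) with hDdef
  have hDpos : 0 < D := by positivity
  have hM1 : (1:ℝ) ≤ (m:ℝ) := by exact_mod_cast hd.trans hm
  have hMpos : (0:ℝ) < (m:ℝ) := by linarith
  set X : ℝ := (m:ℝ)^c with hXdef
  have hXpos : 0 < X := by positivity
  have hXD : X * D ≤ (m:ℝ) := rpow_mul_le hc0 hc1 hd hm
  have hXMD : X ≤ (m:ℝ)/D := (le_div_iff₀ hDpos).2 hXD
  have htpos : (0:ℝ) ≤ (t:ℝ) := Nat.cast_nonneg t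
  have hmcast : (m:ℝ) = (t:ℝ) + (m₁:ℝ) + (m₂:ℝ) := by push_cast [hmdef]; ring
  have hFm : Fcost α γ c d m = α * m / D - γ * X := by
    unfold Fcost; rw [if_neg (by omega)]
  rw [hFm]
  have hαβγ : β + γ ≤ α/12 :=
    hαε.trans (by calc α*ε ≤ α*(1/12) := mul_le_mul_of_nonneg_left hε1 hα
                   _ = α/12 := by ring)
  have hαmX : α * X ≤ α * (m:ℝ)/D := by
    calc α * X ≤ α * ((m:ℝ)/D) := mul_le_mul_of_nonneg_left hXMD hα
      _ = α * (m:ℝ)/D := by ring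
  have hbgX : (β+γ) * X ≤ (α/12) * X := mul_le_mul_of_nonneg_right hαβγ hXpos.le
  have h12X : (α/12) * X ≤ α * X := by
    apply mul_le_mul_of_nonneg_right ?_ hXpos.le; linarith
  by_cases hts : ε * (m:ℝ) ≤ (t:ℝ)
  · -- Case A : big separator
    have hF1 := Fcost_le (α := α) (γ := γ) (c := c) d m₁ hα hγ hc0 hDpos
    have hF2 := Fcost_le (α := α) (γ := γ) (c := c) d m₂ hα hγ hc0 hDpos
    have key : (t:ℝ) + γ * X ≤ α * t / D := by
      have h0 : α * (ε*(m:ℝ)) ≤ α * (t:ℝ) := mul_le_mul_of_nonneg_left hts hα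
      have h1 : α * (ε*(m:ℝ)) / D ≤ α * t / D := by gcongr
      have h2 : (α*ε) * X ≤ (α*ε) * ((m:ℝ)/D) :=
        mul_le_mul_of_nonneg_left hXMD (by positivity)
      have h3 : (α*ε) * ((m:ℝ)/D) = α * (ε*(m:ℝ)) / D := by ring
      have h4 : (β+γ) * X ≤ (α*ε) * X := mul_le_mul_of_nonneg_right hαε hXpos.le
      linarith [h1, h2, h3, h4, ht]
    have hsplit : α * (m₁:ℝ) / D + α * (m₂:ℝ) / D = α * (m:ℝ)/D - α * t / D := by
      rw [hmcast]; field_simp; ring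
    linarith
  · push_neg at hts
    by_cases h1 : m₁ < d
    · -- then both small
      have h2 : m₂ < d := by omega
      have hF1 : Fcost α γ c d m₁ = 0 := by unfold Fcost; rw [if_pos h1]
      have hF2 : Fcost α γ c d m₂ = 0 := by unfold Fcost; rw [if_pos h2]
      rw [hF1, hF2]
      have hγX : 0 ≤ γ * X := by positivity
      linarith [hαmX, hbgX, h12X, ht]
    · push_neg at h1
      have hm1pos : (0:ℝ) < (m₁:ℝ) := by
        have h : 0 < m₁ := by omega
        exact_mod_cast h
      have hFm1 : Fcost α γ c d m₁ = α * m₁ / D - γ * (m₁:ℝ)^c := by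
        unfold Fcost; rw [if_neg (by omega)]
      have hb1' : 3*(m₁:ℝ) ≤ 2*(m:ℝ) := by exact_mod_cast hb1
      by_cases h2 : m₂ < d
      · -- one small, one big
        have hF2 : Fcost α γ c d m₂ = 0 := by unfold Fcost; rw [if_pos h2]
        rw [hFm1, hF2]
        have hsplit : α * (m₁:ℝ) / D = α * (m:ℝ)/D - α * ((t:ℝ)+(m₂:ℝ)) / D := by
          rw [hmcast]; field_simp; ring
        have htm2 : (m:ℝ)/3 ≤ (t:ℝ) + (m₂:ℝ) := by
          rw [hmcast] at hb1' ⊢; linarith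
        have hA3 : α/3 * X ≤ α * ((t:ℝ)+(m₂:ℝ)) / D := by
          have ha : α/3 * X ≤ (α/3) * ((m:ℝ)/D) :=
            mul_le_mul_of_nonneg_left hXMD (by positivity)
          have hb : (α/3) * ((m:ℝ)/D) = α * ((m:ℝ)/3) / D := by ring
          have hcc : α * ((m:ℝ)/3) ≤ α * ((t:ℝ)+(m₂:ℝ)) := mul_le_mul_of_nonneg_left htm2 hα
          have hdd : α * ((m:ℝ)/3) / D ≤ α * ((t:ℝ)+(m₂:ℝ)) / D := by gcongr
          linarith
        have hX1 : 0 ≤ γ * (m₁:ℝ)^c := by positivity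
        have h312 : (α/12) * X ≤ (α/3) * X := by
          apply mul_le_mul_of_nonneg_right ?_ hXpos.le; linarith
        linarith [hA3, hX1, hbgX, h312, ht]
      · -- both big
        push_neg at h2
        have hm2pos : (0:ℝ) < (m₂:ℝ) := by
          have h : 0 < m₂ := by omega
          exact_mod_cast h
        have hFm2 : Fcost α γ c d m₂ = α * m₂ / D - γ * (m₂:ℝ)^c := by
          unfold Fcost; rw [if_neg (by omega)]
        rw [hFm1, hFm2]
        set s : ℝ := (m₁:ℝ) + (m₂:ℝ) with hsdef
        have hspos : 0 < s := by rw [hsdef]; linarith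
        have hsm : s ≤ (m:ℝ) := by rw [hmcast, hsdef]; linarith
        have hm2m1 : (m₂:ℝ) ≤ (m₁:ℝ) := by exact_mod_cast hord
        have f1 : s^c = (m₁:ℝ) * s^(c-1) + (m₂:ℝ) * s^(c-1) := by
          rw [rpow_split hspos c, hsdef]; ring
        have f2 : s^(c-1) ≤ (m₁:ℝ)^(c-1) :=
          Real.rpow_le_rpow_of_nonpos hm1pos (by rw [hsdef]; linarith) (by linarith)
        have f1' : s^c ≤ (m₁:ℝ)^c + (m₂:ℝ) * s^(c-1) := by
          have h := mul_le_mul_of_nonneg_left f2 hm1pos.le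
          rw [← rpow_split hm1pos c] at h
          linarith [f1, h]
        have f5 : (s/2)^(c-1) ≤ (m₂:ℝ)^(c-1) :=
          Real.rpow_le_rpow_of_nonpos hm2pos (by rw [hsdef]; linarith) (by linarith)
        have h2c : (2:ℝ)^(c-1) * (2:ℝ)^((1:ℝ)-c) = 1 := by
          rw [← Real.rpow_add (by norm_num)]; norm_num
        have h2cpos : (0:ℝ) < (2:ℝ)^(c-1) := by positivity
        have f6 : (s/2)^(c-1) = s^(c-1) * (2:ℝ)^((1:ℝ)-c) := by
          rw [Real.div_rpow hspos.le (by norm_num)]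
          rw [eq_comm, mul_comm, eq_div_iff (by positivity)]
          calc (2:ℝ)^((1:ℝ)-c) * s^(c-1) * (2:ℝ)^(c-1)
              = s^(c-1) * ((2:ℝ)^(c-1) * (2:ℝ)^((1:ℝ)-c)) := by ring
            _ = s^(c-1) := by rw [h2c, mul_one]
        have f5' : (m₂:ℝ) * (s^(c-1) * (2:ℝ)^((1:ℝ)-c)) ≤ (m₂:ℝ)^c := by
          rw [rpow_split hm2pos c, ← f6]
          exact mul_le_mul_of_nonneg_left f5 hm2pos.le
        have hεm : ε * (m:ℝ) ≤ (1/12) * (m:ℝ) := mul_le_mul_of_nonneg_right hε1 hMpos.le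
        have f7 : (m:ℝ)/4 ≤ (m₂:ℝ) := by
          rw [hmcast] at hb1' hεm hts ⊢; linarith
        have f8 : (m:ℝ)^(c-1) ≤ s^(c-1) :=
          Real.rpow_le_rpow_of_nonpos hspos hsm (by linarith)
        have f9 : (m:ℝ) * (m:ℝ)^(c-1) = X := (rpow_split hMpos c).symm
        have f78 : X/4 ≤ (m₂:ℝ) * s^(c-1) := by
          calc X/4 = ((m:ℝ)/4) * (m:ℝ)^(c-1) := by rw [← f9]; ring
            _ ≤ (m₂:ℝ) * (m:ℝ)^(c-1) := by
                apply mul_le_mul_of_nonneg_right f7 (by positivity)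
            _ ≤ (m₂:ℝ) * s^(c-1) := mul_le_mul_of_nonneg_left f8 hm2pos.le
        have f10 : (1-ε) * X ≤ s^c := by
          have hs1 : (1-ε) * (m:ℝ) ≤ s := by
            rw [hmcast] at hts ⊢; rw [hsdef]; linarith [hts]
          have h1e : (0:ℝ) < 1-ε := by linarith
          have ha : ((1-ε) * (m:ℝ))^c ≤ s^c :=
            Real.rpow_le_rpow (by positivity) hs1 hc0.le
          have hb : ((1-ε) * (m:ℝ))^c = (1-ε)^c * X := by
            rw [Real.mul_rpow h1e.le hMpos.le, hXdef]
          have hcc : (1-ε) ≤ (1-ε)^c := by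
            calc (1-ε) = (1-ε)^(1:ℝ) := (Real.rpow_one _).symm
              _ ≤ (1-ε)^c := Real.rpow_le_rpow_of_exponent_ge h1e (by linarith) hc1.le
          have hd2 : (1-ε) * X ≤ (1-ε)^c * X := mul_le_mul_of_nonneg_right hcc hXpos.le
          linarith [ha, hb ▸ ha]
        have e1 : s^c + (m₂:ℝ) * s^(c-1) * ((2:ℝ)^((1:ℝ)-c) - 1) ≤ (m₁:ℝ)^c + (m₂:ℝ)^c := by
          linarith [f1', f5']
        have e2 : (4*δ₀) * (X/4) ≤ ((2:ℝ)^((1:ℝ)-c) - 1) * ((m₂:ℝ) * s^(c-1)) := by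
          apply mul_le_mul h4δ f78 (by positivity) (by linarith)
        have hcomb : (1-ε) * X + δ₀ * X ≤ (m₁:ℝ)^c + (m₂:ℝ)^c := by
          linarith [e1, e2, f10]
        have hsplit : α * (m₁:ℝ) / D + α * (m₂:ℝ) / D = α * (m:ℝ)/D - α * (t:ℝ) / D := by
          rw [hmcast]; field_simp; ring
        have hαtD : 0 ≤ α * (t:ℝ) / D := by positivity
        have hgam : (t:ℝ) ≤ γ * ((m₁:ℝ)^c + (m₂:ℝ)^c - X) := by
          have hXX : (3*δ₀/4) * X ≤ (m₁:ℝ)^c + (m₂:ℝ)^c - X := by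
            have h34 : (3*δ₀/4) * X ≤ (δ₀ - ε) * X := by
              apply mul_le_mul_of_nonneg_right ?_ hXpos.le; linarith
            linarith [hcomb]
          have hmul : γ * ((3*δ₀/4) * X) ≤ γ * ((m₁:ℝ)^c + (m₂:ℝ)^c - X) :=
            mul_le_mul_of_nonneg_left hXX hγ
          have hγδ0 : 0 ≤ γ*δ₀ := mul_nonneg hγ hδ.le
          have hβ34 : β ≤ γ*(3*δ₀/4) := by linarith
          have hβX : β * X ≤ (γ*(3*δ₀/4)) * X := mul_le_mul_of_nonneg_right hβ34 hXpos.le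
          have : (γ*(3*δ₀/4)) * X = γ * ((3*δ₀/4) * X) := by ring
          linarith [ht, hβX, hmul]
        linarith [hsplit, hαtD, hgam]

lemma key_sym (β c δ₀ ε γ α : ℝ) (hβ : 1 ≤ β) (hc0 : 0 < c) (hc1 : c < 1)
    (hδ : 0 < δ₀) (h4δ : 4 * δ₀ ≤ (2:ℝ)^((1:ℝ)-c) - 1)
    (hε : 0 < ε) (hε1 : ε ≤ 1/12) (hε2 : ε ≤ δ₀/4)
    (hγ : 0 ≤ γ) (hγδ : 2*β ≤ γ*δ₀) (hα : 0 ≤ α) (hαε : β + γ ≤ α*ε)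
    (d t m₁ m₂ : ℕ) (hd : 1 ≤ d) (hm : d ≤ t + m₁ + m₂)
    (hb1 : 3*m₁ ≤ 2*(t+m₁+m₂)) (hb2 : 3*m₂ ≤ 2*(t+m₁+m₂))
    (ht : (t:ℝ) ≤ β * ((t+m₁+m₂ : ℕ):ℝ)^c) :
    (t:ℝ) + Fcost α γ c d m₁ + Fcost α γ c d m₂ ≤ Fcost α γ c d (t+m₁+m₂) := by
  rcases le_total m₂ m₁ with hord | hord
  · exact key_aux β c δ₀ ε γ α hβ hc0 hc1 hδ h4δ hε hε1 hε2 hγ hγδ hα hαε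
      d t m₁ m₂ hd hm hb1 hb2 ht hord
  · have e : t + m₂ + m₁ = t + m₁ + m₂ := by omega
    have := key_aux β c δ₀ ε γ α hβ hc0 hc1 hδ h4δ hε hε1 hε2 hγ hγδ hα hαε
      d t m₂ m₁ hd (by omega) (by omega) (by omega) (by rw [e]; exact ht) hord
    rw [e] at this
    linarith

lemma decomp (β c δ₀ ε γ α : ℝ) (hβ : 1 ≤ β) (hc0 : 0 < c) (hc1 : c < 1)
    (hδ : 0 < δ₀) (h4δ : 4 * δ₀ ≤ (2:ℝ)^((1:ℝ)-c) - 1)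
    (hε : 0 < ε) (hε1 : ε ≤ 1/12) (hε2 : ε ≤ δ₀/4)
    (hγ : 0 ≤ γ) (hγδ : 2*β ≤ γ*δ₀) (hα : 0 ≤ α) (hαε : β + γ ≤ α*ε)
    {V : Type*} [Fintype V] [DecidableEq V] (G : SimpleGraph V) (d : ℕ)
    (hd : 1 ≤ d) (hsep : HasSepProfile G β c) :
    ∀ n : ℕ, ∀ H : Finset V, H.card ≤ n →
      ∃ A : Finset V, A ⊆ H ∧ SmallComponents G d A ∧
        (((H \ A).card : ℝ)) ≤ Fcost α γ c d H.card := by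
  intro n
  induction n with
  | zero =>
    intro H hH
    refine ⟨H, subset_rfl, smallComponents_single G d H (by omega), ?_⟩
    rw [sdiff_self]
    simp only [Finset.card_empty, Finset.bot_eq_empty] at *
    unfold Fcost
    rw [if_pos (by omega)]
    norm_num
  | succ n ih =>
    intro H hH
    by_cases hsmall : H.card < d
    · refine ⟨H, subset_rfl, smallComponents_single G d H hsmall, ?_⟩
      rw [sdiff_self]
      simp only [Finset.bot_eq_empty, Finset.card_empty]
      unfold Fcost
      rw [if_pos hsmall]
      norm_num
    · push_neg at hsmall
      obtain ⟨T, U₁, U₂, hUnion, hTU₁, hTU₂, hU₁U₂, hDis, hbal₁, hbal₂, hTcard⟩ := hsep H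
      have hcard : H.card = T.card + U₁.card + U₂.card := by
        rw [← hUnion, Finset.card_union_of_disjoint, Finset.card_union_of_disjoint hTU₁]
        exact Finset.disjoint_union_left.2 ⟨hTU₂, hU₁U₂⟩
      have hU₁H : U₁ ⊆ H := by
        rw [← hUnion]; intro x hx; simp [hx]
      have hU₂H : U₂ ⊆ H := by
        rw [← hUnion]; exact Finset.subset_union_right
      have hn₁ : U₁.card ≤ n := by omega
      have hn₂ : U₂.card ≤ n := by omega
      obtain ⟨A₁, hA₁U, hA₁S, hA₁c⟩ := ih U₁ hn₁
      obtain ⟨A₂, hA₂U, hA₂S, hA₂c⟩ := ih U₂ hn₂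
      have hAdis : Disjoint A₁ A₂ := hU₁U₂.mono hA₁U hA₂U
      refine ⟨A₁ ∪ A₂, Finset.union_subset (hA₁U.trans hU₁H) (hA₂U.trans hU₂H),
        smallComponents_union G d hA₁U hA₂U hU₁U₂ hDis hA₁S hA₂S, ?_⟩
      have hc₁ : (U₁ \ A₁).card = U₁.card - A₁.card := Finset.card_sdiff_of_subset hA₁U
      have hc₂ : (U₂ \ A₂).card = U₂.card - A₂.card := Finset.card_sdiff_of_subset hA₂U
      have hAsub : A₁ ∪ A₂ ⊆ H := Finset.union_subset (hA₁U.trans hU₁H) (hA₂U.trans hU₂H)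
      have hAcard : (A₁ ∪ A₂).card = A₁.card + A₂.card := Finset.card_union_of_disjoint hAdis
      have hHA : (H \ (A₁ ∪ A₂)).card = H.card - (A₁.card + A₂.card) := by
        rw [Finset.card_sdiff_of_subset hAsub, hAcard]
      have hA₁le : A₁.card ≤ U₁.card := Finset.card_le_card hA₁U
      have hA₂le : A₂.card ≤ U₂.card := Finset.card_le_card hA₂U
      have hcast : ((H \ (A₁ ∪ A₂)).card : ℝ)
          = (T.card : ℝ) + ((U₁ \ A₁).card : ℝ) + ((U₂ \ A₂).card : ℝ) := by
        rw [hHA, hc₁, hc₂, hcard]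
        rw [Nat.cast_sub (by omega), Nat.cast_sub hA₁le, Nat.cast_sub hA₂le]
        push_cast
        ring
      have hkey := key_sym β c δ₀ ε γ α hβ hc0 hc1 hδ h4δ hε hε1 hε2 hγ hγδ hα hαε
        d T.card U₁.card U₂.card hd (by omega) (by omega) (by omega)
        (by rw [← hcard]; exact hTcard)
      rw [hcast, ← hcard] at *
      calc (T.card : ℝ) + ((U₁ \ A₁).card : ℝ) + ((U₂ \ A₂).card : ℝ)
          ≤ (T.card : ℝ) + Fcost α γ c d U₁.card + Fcost α γ c d U₂.card := by
            linarith [hA₁c, hA₂c]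
        _ ≤ Fcost α γ c d H.card := by rw [hcard]; exact hkey

/-- For `β ≥ 1`, `c ∈ (0,1)` there is `α = α(β,c) > 0` such that any graph
on `n ≥ d` vertices with separation profile `s_G(r) ≤ β r^c` contains a subset `A` which
is a union of pairwise disjoint pairwise disconnected components of size at most `d − 1`,
with `|V ∖ A| ≤ α n / d^{1−c}`. -/
theorem small_components_decomposition (β c : ℝ) (hβ : 1 ≤ β) (hc0 : 0 < c) (hc1 : c < 1) :
    ∃ α : ℝ, 0 < α ∧
      ∀ (V : Type) (_ : Fintype V) (_ : DecidableEq V) (G : SimpleGraph V) (d : ℕ),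
        1 ≤ d → d ≤ Fintype.card V → HasSepProfile G β c →
        ∃ A : Finset V, SmallComponents G d A ∧
          (((Finset.univ \ A).card : ℝ) ≤ α * (Fintype.card V) / (d : ℝ) ^ (1 - c)) := by
  have h2c : (1:ℝ) < (2:ℝ)^((1:ℝ)-c) := by
    rw [Real.one_lt_rpow_iff_of_pos (by norm_num : (0:ℝ) < 2)]
    left; exact ⟨by norm_num, by linarith⟩
  set δ₀ : ℝ := ((2:ℝ)^((1:ℝ)-c) - 1)/4 with hδdef
  have hδ : 0 < δ₀ := by rw [hδdef]; linarith
  set ε : ℝ := min (1/12) (δ₀/4) with hεdef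
  have hε : 0 < ε := by rw [hεdef]; apply lt_min <;> [norm_num; linarith]
  have hε1 : ε ≤ 1/12 := min_le_left _ _
  have hε2 : ε ≤ δ₀/4 := min_le_right _ _
  set γ : ℝ := 2*β/δ₀ with hγdef
  have hγ : 0 ≤ γ := by rw [hγdef]; positivity
  have hγδ : 2*β ≤ γ*δ₀ := by rw [hγdef]; field_simp; norm_num
  set α : ℝ := (β+γ)/ε with hαdef
  have hα : 0 < α := by rw [hαdef]; apply div_pos (by linarith) hε
  have hαε : β + γ ≤ α*ε := by rw [hαdef]; field_simp; norm_num
  have h4δ : 4 * δ₀ ≤ (2:ℝ)^((1:ℝ)-c) - 1 := by rw [hδdef]; linarith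
  refine ⟨α, hα, ?_⟩
  intro V iV dV G d hd hn hsep
  obtain ⟨A, hAsub, hAS, hAc⟩ := @decomp β c δ₀ ε γ α hβ hc0 hc1 hδ h4δ hε hε1 hε2 hγ hγδ
    hα.le hαε V iV dV G d hd hsep (@Finset.univ V iV).card (@Finset.univ V iV) le_rfl
  refine ⟨A, hAS, ?_⟩
  have hcardV : (Finset.univ : Finset V).card = Fintype.card V := Finset.card_univ
  have hFc : Fcost α γ c d (Finset.univ : Finset V).card
      ≤ α * (Fintype.card V) / (d:ℝ)^((1:ℝ)-c) := by
    unfold Fcost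
    rw [if_neg (by rw [hcardV]; omega), hcardV]
    have : 0 ≤ γ * ((Fintype.card V : ℕ):ℝ)^c := by positivity
    linarith
  calc ((Finset.univ \ A).card : ℝ) ≤ Fcost α γ c d (Finset.univ : Finset V).card := hAc
    _ ≤ α * (Fintype.card V) / (d:ℝ)^((1:ℝ)-c) := hFc
end

section
/- Let β ≥ 1 and c ∈ (0,1) be constants. There exists a constant α = α(β,c) > 0 such that for all positive integers n ≥ d, any graph G on n vertices with separation profile s_G(r) ≤ β·r^c admits a partition V = A ⊔ B ⊔ C where A and B are each unions of pairwise disjoint, pairwise disconnected components of size at most d−1 (hence d-correctable), and |C| ≤ α·n/d^{2(1−c)}. -/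
open scoped Classical ComplexOrder
open Finset

/-!
Split every piece by a balanced separator until all pieces have fewer than `d` vertices.
With `λ = (3/2)^(1-c) > 1`, the potential `Φ(m) = A m d^(c-1) - B m^c` pays for the separator
`β m^c` of a piece of size `m ≥ d`: a part of size `mᵢ ≤ 2m/3` has `mᵢ^c ≥ λ mᵢ m^(c-1)`, so
the terms `B mᵢ^c` of the parts exceed `B m^c` by enough to cover `β m^c`. Hence the removed
set of any `H` has at most `β A |H| d^(c-1)` vertices. Decomposing `V`, and then the set removed
from it, leaves a set `C` of size at most `(β A)² n d^(2(c-1))`.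
-/
noncomputable def balanceGain (c : ℝ) : ℝ := (3 / 2 : ℝ) ^ (1 - c)

-- `B λ = 1 + B` and `A ≥ 3 (1 + B)` are what the two cases of a split need.
noncomputable def potentialB (c : ℝ) : ℝ := 1 / (balanceGain c - 1)

noncomputable def potentialA (c : ℝ) : ℝ := 4 * (1 + potentialB c)

noncomputable def potential (c d m : ℝ) : ℝ :=
  potentialA c * m * d ^ (c - 1) - potentialB c * m ^ c

section Potential

variable {c d m x : ℝ}

lemma one_lt_balanceGain (hc : c < 1) : 1 < balanceGain c :=
  Real.one_lt_rpow (by norm_num) (by linarith)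

lemma potentialB_pos (hc : c < 1) : 0 < potentialB c :=
  one_div_pos.mpr (sub_pos.mpr (one_lt_balanceGain hc))

lemma potentialA_pos (hc : c < 1) : 0 < potentialA c := by
  unfold potentialA; linarith [potentialB_pos hc]

lemma potentialB_mul_balanceGain (hc : c < 1) :
    potentialB c * balanceGain c = 1 + potentialB c := by
  have := (sub_pos.mpr (one_lt_balanceGain hc)).ne'
  unfold potentialB
  field_simp
  ring

lemma rpow_le_mul_rpow_sub_one (hd : 0 < d) (hdm : d ≤ m) (hc : c ≤ 1) :
    m ^ c ≤ m * d ^ (c - 1) := by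
  have hm : 0 < m := hd.trans_le hdm
  calc m ^ c = m * m ^ (c - 1) := by rw [mul_comm, ← Real.rpow_add_one hm.ne', sub_add_cancel]
    _ ≤ m * d ^ (c - 1) :=
      mul_le_mul_of_nonneg_left (Real.rpow_le_rpow_of_nonpos hd hdm (by linarith)) hm.le

lemma balanceGain_mul_le_rpow (hc : c ≤ 1) (hx : 0 < x) (hxm : 3 * x ≤ 2 * m) :
    balanceGain c * (x * m ^ (c - 1)) ≤ x ^ c := by
  have hm : 0 < m := by linarith
  have hgain : balanceGain c * m ^ (c - 1) = (2 / 3 * m) ^ (c - 1) := by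
    rw [Real.mul_rpow (by norm_num) hm.le, balanceGain, show (2 / 3 : ℝ) = (3 / 2)⁻¹ by norm_num,
      Real.inv_rpow (by norm_num), ← Real.rpow_neg (by norm_num), neg_sub]
  calc balanceGain c * (x * m ^ (c - 1)) = x * (2 / 3 * m) ^ (c - 1) := by
        rw [← hgain]; ring
    _ ≤ x * x ^ (c - 1) :=
      mul_le_mul_of_nonneg_left (Real.rpow_le_rpow_of_nonpos hx (by linarith) (by linarith)) hx.le
    _ = x ^ c := by rw [mul_comm, ← Real.rpow_add_one hx.ne', sub_add_cancel]

lemma potential_le_mul (hx : 0 ≤ x) (hc : c < 1) :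
    potential c d x ≤ potentialA c * x * d ^ (c - 1) := by
  have := mul_nonneg (potentialB_pos hc).le (Real.rpow_nonneg hx c)
  unfold potential
  linarith

lemma rpow_add_mul_le_potential (hd : 0 < d) (hdm : d ≤ m) (hc : c < 1) (hx : 3 * x ≤ 2 * m) :
    m ^ c + potentialA c * x * d ^ (c - 1) ≤ potential c d m := by
  have hB := potentialB_pos hc
  have hmD := rpow_le_mul_rpow_sub_one hd hdm hc.le
  have hD : 0 ≤ d ^ (c - 1) := Real.rpow_nonneg hd.le _
  have hthird : m ^ c ≤ 3 * ((m - x) * d ^ (c - 1)) := by nlinarith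
  have := mul_le_mul_of_nonneg_left hthird (by linarith : 0 ≤ 1 + potentialB c)
  have := Real.rpow_nonneg (hd.le.trans hdm) c
  unfold potential potentialA
  nlinarith

lemma rpow_add_potential_add_potential_le {t m₁ m₂ : ℝ} (hd : 0 < d) (hc : c < 1)
    (h₁ : d ≤ m₁) (h₂ : d ≤ m₂) (hb₁ : 3 * m₁ ≤ 2 * m) (hb₂ : 3 * m₂ ≤ 2 * m) (ht : 0 ≤ t)
    (hsum : t + m₁ + m₂ = m) :
    m ^ c + potential c d m₁ + potential c d m₂ ≤ potential c d m := by
  have hB := potentialB_pos hc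
  have hBgain := potentialB_mul_balanceGain hc
  have hm : 0 < m := by linarith
  have hdm : d ≤ m := by linarith
  have hgain₁ := balanceGain_mul_le_rpow hc.le (hd.trans_le h₁) hb₁
  have hgain₂ := balanceGain_mul_le_rpow hc.le (hd.trans_le h₂) hb₂
  have hmc : m ^ c = m * m ^ (c - 1) := by
    rw [mul_comm, ← Real.rpow_add_one hm.ne', sub_add_cancel]
  have hmD : m ^ (c - 1) ≤ d ^ (c - 1) := Real.rpow_le_rpow_of_nonpos hd hdm (by linarith)
  -- concavity of `x ↦ x ^ c` across the two balanced parts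
  have hsplit : (1 + potentialB c) * (m ^ c - t * m ^ (c - 1)) ≤
      potentialB c * (m₁ ^ c + m₂ ^ c) :=
    calc (1 + potentialB c) * (m ^ c - t * m ^ (c - 1))
        = potentialB c * (balanceGain c * (m₁ * m ^ (c - 1)) +
            balanceGain c * (m₂ * m ^ (c - 1))) := by
          rw [hmc, ← hBgain, ← hsum]; ring
      _ ≤ potentialB c * (m₁ ^ c + m₂ ^ c) := by gcongr
  have htD : (1 + potentialB c) * (t * m ^ (c - 1)) ≤
      4 * (1 + potentialB c) * (t * d ^ (c - 1)) := by
    have := mul_nonneg ht (Real.rpow_nonneg hd.le (c - 1))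
    have := mul_le_mul_of_nonneg_left (mul_le_mul_of_nonneg_left hmD ht)
      (by linarith : 0 ≤ 1 + potentialB c)
    nlinarith
  have hlin : potentialA c * m * d ^ (c - 1) = potentialA c * t * d ^ (c - 1) +
      potentialA c * m₁ * d ^ (c - 1) + potentialA c * m₂ * d ^ (c - 1) := by
    rw [← hsum]; ring
  unfold potential
  rw [hlin, potentialA]
  linarith

lemma add_add_le_mul_potential {β t m₁ m₂ s₁ s₂ : ℝ} (hβ : 0 ≤ β) (hd : 0 < d) (hdm : d ≤ m)
    (hc : c < 1) (hb₁ : 3 * m₁ ≤ 2 * m) (hb₂ : 3 * m₂ ≤ 2 * m) (hm₁ : 0 ≤ m₁) (hm₂ : 0 ≤ m₂)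
    (ht₀ : 0 ≤ t) (hsum : t + m₁ + m₂ = m) (ht : t ≤ β * m ^ c)
    (hs₁ : s₁ = 0 ∨ d ≤ m₁ ∧ s₁ ≤ β * potential c d m₁)
    (hs₂ : s₂ = 0 ∨ d ≤ m₂ ∧ s₂ ≤ β * potential c d m₂) :
    t + s₁ + s₂ ≤ β * potential c d m := by
  have hbig (x : ℝ) (hx : 0 ≤ x) (hxm : 3 * x ≤ 2 * m) :
      t + β * potential c d x ≤ β * potential c d m := by
    have := mul_le_mul_of_nonneg_left (potential_le_mul (d := d) hx hc) hβ
    have := mul_le_mul_of_nonneg_left (rpow_add_mul_le_potential hd hdm hc hxm) hβ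
    nlinarith
  rcases hs₁ with rfl | ⟨hd₁, hs₁⟩ <;> rcases hs₂ with rfl | ⟨hd₂, hs₂⟩
  · have := mul_le_mul_of_nonneg_left
      (rpow_add_mul_le_potential hd hdm hc (by linarith : 3 * 0 ≤ 2 * m)) hβ
    simp only [mul_zero, zero_mul, add_zero] at this
    linarith
  · linarith [hbig m₂ hm₂ hb₂]
  · linarith [hbig m₁ hm₁ hb₁]
  · have := mul_le_mul_of_nonneg_left
      (rpow_add_potential_add_potential_le hd hc hd₁ hd₂ hb₁ hb₂ ht₀ hsum) hβ
    nlinarith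

end Potential

section Graph

variable {V : Type*} {G : SimpleGraph V}

lemma Disconn.mono {A B A' B' : Finset V} (h : Disconn G A B) (hA : A' ⊆ A) (hB : B' ⊆ B) :
    Disconn G A' B' :=
  fun a ha b hb => h a (hA ha) b (hB hb)

lemma Disconn.symm {A B : Finset V} (h : Disconn G A B) : Disconn G B A :=
  fun b hb a ha hab => h a ha b hb hab.symm

variable [DecidableEq V] {d : ℕ}

lemma SmallComponents.of_card_lt {X : Finset V} (h : X.card < d) : SmallComponents G d X :=
  ⟨1, fun _ => X, by simp, fun _ => h, fun i j hij => absurd (Subsingleton.elim i j) hij⟩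

lemma biUnion_univ_append {l₁ l₂ : ℕ} (W₁ : Fin l₁ → Finset V) (W₂ : Fin l₂ → Finset V) :
    univ.biUnion (Fin.append W₁ W₂) = univ.biUnion W₁ ∪ univ.biUnion W₂ := by
  ext a
  simp only [mem_union, mem_biUnion, mem_univ, true_and]
  constructor
  · rintro ⟨i, hi⟩
    induction i using Fin.addCases with
    | left i => exact Or.inl ⟨i, by simpa using hi⟩
    | right i => exact Or.inr ⟨i, by simpa using hi⟩
  · rintro (⟨i, hi⟩ | ⟨i, hi⟩)
    · exact ⟨Fin.castAdd l₂ i, by simpa using hi⟩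
    · exact ⟨Fin.natAdd l₁ i, by simpa using hi⟩

lemma SmallComponents.union {X Y : Finset V} (hX : SmallComponents G d X)
    (hY : SmallComponents G d Y) (hXY : Disjoint X Y) (hdisc : Disconn G X Y) :
    SmallComponents G d (X ∪ Y) := by
  obtain ⟨l₁, W₁, rfl, hW₁, hp₁⟩ := hX
  obtain ⟨l₂, W₂, rfl, hW₂, hp₂⟩ := hY
  have hsub₁ (i : Fin l₁) : W₁ i ⊆ univ.biUnion W₁ := subset_biUnion_of_mem W₁ (mem_univ i)
  have hsub₂ (i : Fin l₂) : W₂ i ⊆ univ.biUnion W₂ := subset_biUnion_of_mem W₂ (mem_univ i)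
  refine ⟨l₁ + l₂, Fin.append W₁ W₂, (biUnion_univ_append W₁ W₂).symm,
    Fin.addCases (by simpa using hW₁) (by simpa using hW₂), fun i j => ?_⟩
  induction i using Fin.addCases <;> induction j using Fin.addCases <;>
    simp only [Fin.append_left, Fin.append_right, ne_eq, Fin.castAdd_inj, Fin.natAdd_inj]
  case left.left i j => exact hp₁ i j
  case left.right i j =>
    exact fun _ => ⟨hXY.mono (hsub₁ i) (hsub₂ j), hdisc.mono (hsub₁ i) (hsub₂ j)⟩
  case right.left i j =>
    exact fun _ => ⟨(hXY.mono (hsub₁ j) (hsub₂ i)).symm, hdisc.symm.mono (hsub₂ i) (hsub₁ j)⟩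
  case right.right i j => exact hp₂ i j

lemma SmallComponents.isCorrectableSet [Fintype V] {A : Finset V} (h : SmallComponents G d A) :
    IsCorrectableSet G d A := by
  obtain ⟨l, U, rfl, hU, hp⟩ := h
  intro F hF
  exact hF.2.2.1 l U (fun i => hF.2.1 _ (hU i)) hp

end Graph

section Decomposition

variable {V : Type*} [DecidableEq V] {G : SimpleGraph V} {d : ℕ} {β c : ℝ}

lemma exists_smallComponents_sdiff_potential (hβ : 0 ≤ β) (hc : c < 1)
    (hsep : HasSepProfile G β c) (hd : 0 < d) (H : Finset V) :
    ∃ S ⊆ H, SmallComponents G d (H \ S) ∧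
      (S = ∅ ∨ d ≤ H.card ∧ (S.card : ℝ) ≤ β * potential c d H.card) := by
  induction H using Finset.strongInduction with
  | H H ih =>
  by_cases hsmall : H.card < d
  · exact ⟨∅, empty_subset H, by simpa using .of_card_lt hsmall, Or.inl rfl⟩
  rw [not_lt] at hsmall
  obtain ⟨T, U₁, U₂, hH, hTU₁, hTU₂, hU₁₂, hdisc, hb₁, hb₂, hT⟩ := hsep H
  have hcard : T.card + U₁.card + U₂.card = H.card := by
    rw [← hH, card_union_of_disjoint (disjoint_union_left.mpr ⟨hTU₂, hU₁₂⟩),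
      card_union_of_disjoint hTU₁]
  have hTH : T ⊆ H := hH ▸ subset_union_left.trans subset_union_left
  have hU₁H : U₁ ⊆ H := hH ▸ subset_union_right.trans subset_union_left
  have hU₂H : U₂ ⊆ H := hH ▸ subset_union_right
  obtain ⟨S₁, hS₁, hsc₁, hbd₁⟩ :=
    ih U₁ (Finset.ssubset_iff_subset_ne.mpr ⟨hU₁H, by rintro rfl; omega⟩)
  obtain ⟨S₂, hS₂, hsc₂, hbd₂⟩ :=
    ih U₂ (Finset.ssubset_iff_subset_ne.mpr ⟨hU₂H, by rintro rfl; omega⟩)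
  have hrest : H \ (T ∪ S₁ ∪ S₂) = (U₁ \ S₁) ∪ (U₂ \ S₂) := by
    ext a
    have : a ∈ T → a ∉ U₁ := fun h => disjoint_left.mp hTU₁ h
    have : a ∈ T → a ∉ U₂ := fun h => disjoint_left.mp hTU₂ h
    have : a ∈ U₁ → a ∉ U₂ := fun h => disjoint_left.mp hU₁₂ h
    have : a ∈ S₁ → a ∈ U₁ := fun h => hS₁ h
    have : a ∈ S₂ → a ∈ U₂ := fun h => hS₂ h
    simp only [mem_sdiff, mem_union, ← hH]
    grind
  refine ⟨T ∪ S₁ ∪ S₂, union_subset (union_subset hTH (hS₁.trans hU₁H)) (hS₂.trans hU₂H),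
    hrest ▸ hsc₁.union hsc₂ (hU₁₂.mono sdiff_subset sdiff_subset)
      (hdisc.mono sdiff_subset sdiff_subset), Or.inr ⟨hsmall, ?_⟩⟩
  have hbd (U S : Finset V) (h : S = ∅ ∨ d ≤ U.card ∧ (S.card : ℝ) ≤ β * potential c d U.card) :
      (S.card : ℝ) = 0 ∨ (d : ℝ) ≤ U.card ∧ (S.card : ℝ) ≤ β * potential c d U.card := by
    rcases h with rfl | ⟨h, hS⟩
    · simp
    · exact Or.inr ⟨by exact_mod_cast h, hS⟩
  calc ((T ∪ S₁ ∪ S₂).card : ℝ) ≤ T.card + S₁.card + S₂.card := by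
        exact_mod_cast (card_union_le (T ∪ S₁) S₂).trans
          (Nat.add_le_add_right (card_union_le T S₁) _)
    _ ≤ β * potential c d H.card :=
      add_add_le_mul_potential hβ (by exact_mod_cast hd) (by exact_mod_cast hsmall) hc
        (by exact_mod_cast hb₁) (by exact_mod_cast hb₂) (by positivity) (by positivity)
        (by positivity) (by exact_mod_cast hcard) hT (hbd U₁ S₁ hbd₁) (hbd U₂ S₂ hbd₂)

lemma exists_smallComponents_sdiff_card_le (hβ : 0 ≤ β) (hc : c < 1)
    (hsep : HasSepProfile G β c) (hd : 0 < d) (H : Finset V) :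
    ∃ S ⊆ H, SmallComponents G d (H \ S) ∧
      (S.card : ℝ) ≤ β * potentialA c * H.card * (d : ℝ) ^ (c - 1) := by
  obtain ⟨S, hSH, hsc, hS⟩ := exists_smallComponents_sdiff_potential hβ hc hsep hd H
  refine ⟨S, hSH, hsc, ?_⟩
  have hA := (potentialA_pos hc).le
  rcases hS with rfl | ⟨-, hS⟩
  · simp only [card_empty, Nat.cast_zero]
    positivity
  · calc (S.card : ℝ) ≤ β * potential c d H.card := hS
      _ ≤ β * (potentialA c * H.card * (d : ℝ) ^ (c - 1)) :=
        mul_le_mul_of_nonneg_left (potential_le_mul (Nat.cast_nonneg _) hc) hβ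
      _ = _ := by ring

end Decomposition

theorem abc_partition_weak_general (β c : ℝ) (hβ : 1 ≤ β) (hc1 : c < 1) :
    ∃ α : ℝ, 0 < α ∧
      ∀ (V : Type) (_ : Fintype V) (_ : DecidableEq V) (G : SimpleGraph V) (d : ℕ),
        1 ≤ d → d ≤ Fintype.card V → HasSepProfile G β c →
        ∃ A B C : Finset V,
          A ∪ B ∪ C = Finset.univ ∧
          Disjoint A B ∧ Disjoint A C ∧ Disjoint B C ∧
          SmallComponents G d A ∧ SmallComponents G d B ∧
          IsCorrectableSet G d A ∧ IsCorrectableSet G d B ∧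
          ((C.card : ℝ) ≤ α * (Fintype.card V) / (d : ℝ) ^ (2 * (1 - c))) := by
  have hβ₀ : 0 ≤ β := by linarith
  refine ⟨(β * potentialA c) ^ 2, pow_pos (mul_pos (by linarith) (potentialA_pos hc1)) 2, ?_⟩
  intro V _ _ G d hd _ hsep
  obtain ⟨S₁, -, hA, hS₁⟩ := exists_smallComponents_sdiff_card_le hβ₀ hc1 hsep hd univ
  obtain ⟨S₂, hS₂, hB, hS₂card⟩ := exists_smallComponents_sdiff_card_le hβ₀ hc1 hsep hd S₁
  refine ⟨univ \ S₁, S₁ \ S₂, S₂, ?_, disjoint_sdiff_self_left.mono_right sdiff_subset,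
    disjoint_sdiff_self_left.mono_right hS₂, sdiff_disjoint, hA, hB, hA.isCorrectableSet,
    hB.isCorrectableSet, ?_⟩
  · ext a
    simp only [mem_union, mem_sdiff, mem_univ, true_and, iff_true]
    tauto
  have hβA : 0 ≤ β * potentialA c := mul_nonneg hβ₀ (potentialA_pos hc1).le
  have hd₀ : (0 : ℝ) < d := by exact_mod_cast hd
  have hdpow : (d : ℝ) ^ (2 * (1 - c)) = ((d : ℝ) ^ (c - 1))⁻¹ ^ 2 := by
    rw [← Real.rpow_neg hd₀.le, ← Real.rpow_mul_natCast hd₀.le]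
    congr 1
    push_cast
    ring
  rw [card_univ] at hS₁
  calc (S₂.card : ℝ) ≤ β * potentialA c * S₁.card * (d : ℝ) ^ (c - 1) := hS₂card
    _ ≤ β * potentialA c * (β * potentialA c * Fintype.card V * (d : ℝ) ^ (c - 1)) *
        (d : ℝ) ^ (c - 1) := by gcongr
    _ = _ := by rw [hdpow]; field_simp

/-- For `β ≥ 1`, `c ∈ (0,1)` there is `α = α(β,c) > 0` such that any graph
on `n ≥ d` vertices with separation profile `s_G(r) ≤ β r^c` admits a partition
`V = A ⊔ B ⊔ C` where `A` and `B` are unions of pairwise disjoint pairwise disconnected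
components of size at most `d − 1` (hence `d`-correctable), and `|C| ≤ α n / d^{2(1−c)}`. -/
theorem abc_partition_weak (β c : ℝ) (hβ : 1 ≤ β) (hc0 : 0 < c) (hc1 : c < 1) :
    ∃ α : ℝ, 0 < α ∧
      ∀ (V : Type) (_ : Fintype V) (_ : DecidableEq V) (G : SimpleGraph V) (d : ℕ),
        1 ≤ d → d ≤ Fintype.card V → HasSepProfile G β c →
        ∃ A B C : Finset V,
          A ∪ B ∪ C = Finset.univ ∧
          Disjoint A B ∧ Disjoint A C ∧ Disjoint B C ∧
          SmallComponents G d A ∧ SmallComponents G d B ∧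
          IsCorrectableSet G d A ∧ IsCorrectableSet G d B ∧
          ((C.card : ℝ) ≤ α * (Fintype.card V) / (d : ℝ) ^ (2 * (1 - c))) :=
  abc_partition_weak_general β c hβ hc1
end

section
/- Let β ≥ 1 and c ∈ (0,1). Set ε = (1−(2/3)^c)/(20β). Let G be a graph on n vertices with separation profile s_G(r) ≤ β·r^c for all r, and let d ≤ n. Then any vertex set W with |W| ≤ (ε·d)^{1/c} and outer boundary |∂₊W| ≤ d/4 is d-correctable with respect to G. -/
open scoped Classical ComplexOrder
open Finset

lemma mem_outerBoundary_iff {V : Type*} [Fintype V] (G : SimpleGraph V) (U : Finset V)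
    (v : V) : v ∈ outerBoundary G U ↔ v ∉ U ∧ ∃ u ∈ U, G.Adj u v := by
  simp [outerBoundary]

/-- Key inductive lemma: a set with small enough boundary (quantified by the potential
`d/4 + K(εd − |U|^c)`) belongs to every `d`-correctable family. -/
lemma correctable_key {V : Type*} [Fintype V] [DecidableEq V] (G : SimpleGraph V)
    (β c : ℝ) (hβ : 1 ≤ β) (hc0 : 0 < c) (d : ℕ) (hd1 : 1 ≤ d)
    (hsep : HasSepProfile G β c) (F : Set (Finset V)) (hF : IsCorrectableFamily G d F) :
    ∀ (n : ℕ) (U : Finset V), U.card ≤ n →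
      ((U.card : ℝ)) ^ c ≤ (1 - (2/3 : ℝ) ^ c) / (20 * β) * d →
      ((outerBoundary G U).card : ℝ) ≤ (d : ℝ)/4 +
        (β / (1 - (2/3 : ℝ) ^ c)) * ((1 - (2/3 : ℝ) ^ c) / (20 * β) * d - ((U.card : ℝ)) ^ c) →
      U ∈ F := by
  obtain ⟨hTriv, hDist, hUnion, hExp⟩ := hF
  have hβ0 : (0 : ℝ) < β := lt_of_lt_of_le one_pos hβ
  have hγ1 : (2/3 : ℝ) ^ c < 1 := Real.rpow_lt_one (by norm_num) (by norm_num) hc0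
  have hγ0 : (0 : ℝ) < (2/3 : ℝ) ^ c := Real.rpow_pos_of_pos (by norm_num) c
  set g : ℝ := (2/3 : ℝ) ^ c with hgdef
  have h1g : (0 : ℝ) < 1 - g := by linarith
  set K : ℝ := β / (1 - g) with hKdef
  have hK0 : 0 < K := div_pos hβ0 h1g
  have hKβ : β ≤ K := by
    rw [hKdef]; rw [le_div_iff₀ h1g]; nlinarith
  have hK1g : K * (1 - g) = β := by
    rw [hKdef]; field_simp
  have hKε : K * ((1 - g) / (20 * β)) = 1/20 := by
    rw [hKdef]; field_simp
  intro n
  induction n using Nat.strong_induction_on with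
  | _ n ih =>
    intro U hcard hsize hbnd
    rcases eq_or_ne U ∅ with rfl | hne
    · exact hDist ∅ (by simpa using Nat.lt_of_lt_of_le Nat.zero_lt_one hd1)
    have hUpos : 0 < U.card := Finset.card_pos.mpr (Finset.nonempty_iff_ne_empty.mpr hne)
    obtain ⟨T, U₁, U₂, hunion, hTd1, hTd2, hd12, hdisc, hb1, hb2, hTcard⟩ := hsep U
    have hsub1 : U₁ ⊆ U := by
      rw [← hunion]; intro x hx; simp [hx]
    have hsub2 : U₂ ⊆ U := by
      rw [← hunion]; intro x hx; simp [hx]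
    have hm0 : (0 : ℝ) ≤ (U.card : ℝ) := Nat.cast_nonneg _
    have ha0 : (0 : ℝ) ≤ ((U.card : ℝ)) ^ c := Real.rpow_nonneg hm0 c
    -- the boundary of each part is contained in T ∪ ∂₊U
    have hbd1 : ∀ (A B : Finset V), A = U₁ ∧ B = U₂ ∨ A = U₂ ∧ B = U₁ →
        outerBoundary G A ⊆ T ∪ outerBoundary G U := by
      rintro A B hAB v hv
      rw [mem_outerBoundary_iff] at hv
      obtain ⟨hvA, u, huA, hadj⟩ := hv
      by_cases hvU : v ∈ U
      · rw [← hunion] at hvU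
        simp only [Finset.mem_union] at hvU
        rcases hvU with (hvT | hv1) | hv2
        · exact Finset.mem_union_left _ hvT
        · exfalso
          rcases hAB with ⟨rfl, rfl⟩ | ⟨rfl, rfl⟩
          · exact hvA hv1
          · exact hdisc v hv1 u huA hadj.symm
        · exfalso
          rcases hAB with ⟨rfl, rfl⟩ | ⟨rfl, rfl⟩
          · exact hdisc u huA v hv2 hadj
          · exact hvA hv2
      · apply Finset.mem_union_right
        rw [mem_outerBoundary_iff]
        refine ⟨hvU, u, ?_, hadj⟩
        rcases hAB with ⟨rfl, rfl⟩ | ⟨rfl, rfl⟩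
        · exact hsub1 huA
        · exact hsub2 huA
    -- each part satisfies the inductive invariant
    have hpart : ∀ (A B : Finset V), A = U₁ ∧ B = U₂ ∨ A = U₂ ∧ B = U₁ → A ∈ F := by
      rintro A B hAB
      have hAsub : A ⊆ U := by rcases hAB with ⟨rfl, _⟩ | ⟨rfl, _⟩ <;> assumption
      have hbA : 3 * A.card ≤ 2 * U.card := by
        rcases hAB with ⟨rfl, _⟩ | ⟨rfl, _⟩ <;> assumption
      have hAlt : A.card < U.card := by omega
      have hAle : (A.card : ℝ) ≤ (2/3) * (U.card : ℝ) := by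
        have : (3 : ℝ) * (A.card : ℝ) ≤ 2 * (U.card : ℝ) := by exact_mod_cast hbA
        linarith
      have hArpow : ((A.card : ℝ)) ^ c ≤ g * ((U.card : ℝ)) ^ c := by
        calc ((A.card : ℝ)) ^ c ≤ ((2/3) * (U.card : ℝ)) ^ c :=
              Real.rpow_le_rpow (Nat.cast_nonneg _) hAle hc0.le
          _ = g * ((U.card : ℝ)) ^ c := Real.mul_rpow (by norm_num) hm0
      have hbdA : ((outerBoundary G A).card : ℝ) ≤ ((T.card : ℝ)) + ((outerBoundary G U).card : ℝ) := by
        calc ((outerBoundary G A).card : ℝ) ≤ ((T ∪ outerBoundary G U).card : ℝ) := by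
              exact_mod_cast Finset.card_le_card (hbd1 A B hAB)
          _ ≤ ((T.card : ℝ)) + ((outerBoundary G U).card : ℝ) := by
              exact_mod_cast Finset.card_union_le _ _
      refine ih A.card (lt_of_lt_of_le hAlt hcard) A le_rfl ?_ ?_
      · calc ((A.card : ℝ)) ^ c ≤ g * ((U.card : ℝ)) ^ c := hArpow
          _ ≤ ((U.card : ℝ)) ^ c := by nlinarith
          _ ≤ (1 - g) / (20 * β) * d := hsize
      · have h1 : K * ((1 - g) / (20 * β) * d - ((A.card : ℝ)) ^ c) ≥
            K * ((1 - g) / (20 * β) * d - ((U.card : ℝ)) ^ c) + K * (1 - g) * ((U.card : ℝ)) ^ c := by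
          have : ((A.card : ℝ)) ^ c ≤ g * ((U.card : ℝ)) ^ c := hArpow
          nlinarith
        have h2 : ((T.card : ℝ)) ≤ K * (1 - g) * ((U.card : ℝ)) ^ c := by
          rw [hK1g]; exact hTcard
        linarith
    have hU1F : U₁ ∈ F := hpart U₁ U₂ (Or.inl ⟨rfl, rfl⟩)
    have hU2F : U₂ ∈ F := hpart U₂ U₁ (Or.inr ⟨rfl, rfl⟩)
    -- union of the two parts
    have hdisc' : Disconn G U₂ U₁ := fun a ha b hb hadj => hdisc b hb a ha hadj.symm
    have hAF : U₁ ∪ U₂ ∈ F := by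
      have h := hUnion 2 (fun i => if i.val = 0 then U₁ else U₂)
        (fun i => by split; exacts [hU1F, hU2F])
        (fun i j hij => by
          have h2i := i.isLt
          have h2j := j.isLt
          split_ifs with hi hj hj
          · exact absurd (Fin.ext (hi.trans hj.symm)) hij
          · exact ⟨hd12, hdisc⟩
          · exact ⟨hd12.symm, hdisc'⟩
          · exact absurd (Fin.ext (by omega)) hij)
      have heq : Finset.univ.biUnion (fun i : Fin 2 => if i.val = 0 then U₁ else U₂)
          = U₁ ∪ U₂ := by
        ext x
        simp [Finset.mem_biUnion, Fin.exists_fin_two]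
      rwa [heq] at h
    -- the correction set
    have hT'card : ((T ∪ outerBoundary G U).card : ℝ) < d := by
      have hle : ((T ∪ outerBoundary G U).card : ℝ) ≤ ((T.card : ℝ)) + ((outerBoundary G U).card : ℝ) := by
        exact_mod_cast Finset.card_union_le _ _
      have h2 : ((T.card : ℝ)) ≤ K * ((U.card : ℝ)) ^ c :=
        le_trans hTcard (mul_le_mul_of_nonneg_right hKβ ha0)
      have h3 : K * ((1 - g) / (20 * β) * d) = (d : ℝ)/20 := by
        rw [← mul_assoc, hKε]; ring
      have h4 : K * ((1 - g) / (20 * β) * d - ((U.card : ℝ)) ^ c)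
          = K * ((1 - g) / (20 * β) * d) - K * (((U.card : ℝ)) ^ c) := mul_sub _ _ _
      have hd0 : (1 : ℝ) ≤ (d : ℝ) := by exact_mod_cast hd1
      linarith
    have hT'F : T ∪ outerBoundary G U ∈ F := hDist _ (by exact_mod_cast hT'card)
    have hexp : (U₁ ∪ U₂) ∪ (T ∪ outerBoundary G U) ∈ F := by
      refine hExp _ hAF _ hT'F ?_
      intro v hv
      rw [mem_outerBoundary_iff] at hv
      obtain ⟨hvA, u, huA, hadj⟩ := hv
      by_cases hvU : v ∈ U
      · rw [← hunion] at hvU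
        simp only [Finset.mem_union] at hvU hvA
        rcases hvU with (hvT | hv1) | hv2
        · exact Finset.mem_union_left _ hvT
        · exact absurd (Or.inl hv1) hvA
        · exact absurd (Or.inr hv2) hvA
      · apply Finset.mem_union_right
        rw [mem_outerBoundary_iff]
        have huU : u ∈ U := by
          simp only [Finset.mem_union] at huA
          rcases huA with h | h
          exacts [hsub1 h, hsub2 h]
        exact ⟨hvU, u, huU, hadj⟩
    refine hTriv _ hexp U ?_
    rw [← hunion]
    intro x hx
    simp only [Finset.mem_union] at hx ⊢
    tauto

/-- Let `ε = (1 − (2/3)^c)/(20β)`. If `G` has separation profile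
`s_G(r) ≤ β r^c` and `d ≤ n`, then any set `W` with `|W| ≤ (εd)^{1/c}` and
`|∂₊W| ≤ d/4` is `d`-correctable with respect to `G`. -/
theorem small_boundary_correctable (β c : ℝ) (hβ : 1 ≤ β) (hc0 : 0 < c) (hc1 : c < 1)
    {V : Type*} [Fintype V] [DecidableEq V] (G : SimpleGraph V) (d : ℕ)
    (hd : d ≤ Fintype.card V) (hsep : HasSepProfile G β c) (W : Finset V)
    (hW : ((W.card : ℝ)) ≤ (((1 - (2 / 3 : ℝ) ^ c) / (20 * β)) * (d : ℝ)) ^ (1 / c))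
    (hbd : (((outerBoundary G W).card : ℝ)) ≤ (d : ℝ) / 4) :
    IsCorrectableSet G d W := by
  intro F hF
  have hβ0 : (0 : ℝ) < β := lt_of_lt_of_le one_pos hβ
  have hγ1 : (2/3 : ℝ) ^ c < 1 := Real.rpow_lt_one (by norm_num) (by norm_num) hc0
  have hγ0 : (0 : ℝ) < (2/3 : ℝ) ^ c := Real.rpow_pos_of_pos (by norm_num) c
  have h1g : (0 : ℝ) < 1 - (2/3 : ℝ) ^ c := by linarith
  rcases Nat.eq_zero_or_pos d with rfl | hd1
  · -- d = 0 : then W = ∅, and ∅ is in every family via the empty union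
    have hW0 : W = ∅ := by
      have : (((1 - (2 / 3 : ℝ) ^ c) / (20 * β)) * ((0:ℕ) : ℝ)) ^ (1 / c) = 0 := by
        rw [Nat.cast_zero, mul_zero]
        exact Real.zero_rpow (one_div_ne_zero hc0.ne')
      rw [this] at hW
      have : W.card = 0 := by exact_mod_cast le_antisymm hW (Nat.cast_nonneg _)
      exact Finset.card_eq_zero.mp this
    subst hW0
    have h := hF.2.2.1 0 (fun i => i.elim0) (fun i => i.elim0) (fun i => i.elim0)
    simpa using h
  · -- d ≥ 1 : apply the key lemma
    have hε0 : (0 : ℝ) ≤ (1 - (2/3 : ℝ) ^ c) / (20 * β) * d :=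
      mul_nonneg (div_nonneg h1g.le (by linarith)) (Nat.cast_nonneg _)
    have hsize : ((W.card : ℝ)) ^ c ≤ (1 - (2/3 : ℝ) ^ c) / (20 * β) * d := by
      have h1 : ((W.card : ℝ)) ^ c ≤
          ((((1 - (2 / 3 : ℝ) ^ c) / (20 * β)) * (d : ℝ)) ^ (1 / c)) ^ c :=
        Real.rpow_le_rpow (Nat.cast_nonneg _) hW hc0.le
      rwa [← Real.rpow_mul hε0, one_div, inv_mul_cancel₀ hc0.ne', Real.rpow_one] at h1
    have hK0 : (0 : ℝ) < β / (1 - (2/3 : ℝ) ^ c) := div_pos hβ0 h1g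
    refine correctable_key G β c hβ hc0 d hd1 hsep F hF W.card W le_rfl hsize ?_
    have : (0 : ℝ) ≤ (β / (1 - (2/3 : ℝ) ^ c)) *
        ((1 - (2/3 : ℝ) ^ c) / (20 * β) * d - ((W.card : ℝ)) ^ c) := by
      apply mul_nonneg hK0.le
      linarith
    linarith
end

section
/- In the recursive separator decomposition of a set W with |W| ≤ (εd)^{1/c} and |∂₊W| ≤ d/4 (where ε = (1−(2/3)^c)/(20β)), every node U of the decomposition tree satisfies |∂₊U| ≤ d/4 + β|W|^c/(1−(2/3)^c) < d/3. -/
open scoped Classical ComplexOrder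
open Finset

/-- In the recursive separator decomposition of a set `W` with
`|W| ≤ (εd)^{1/c}` and `|∂₊W| ≤ d/4` (where `ε = (1 − (2/3)^c)/(20β)`), every node `U`
of the decomposition tree satisfies `|∂₊U| ≤ d/4 + β|W|^c/(1 − (2/3)^c) < d/3`. -/
theorem decomposition_boundary_bound (β c : ℝ) (hβ : 1 ≤ β) (hc0 : 0 < c) (hc1 : c < 1)
    {V : Type*} [Fintype V] [DecidableEq V] (G : SimpleGraph V) (d : ℕ) (hd : 1 ≤ d)
    (W : Finset V)
    (hW : ((W.card : ℝ)) ≤ (((1 - (2 / 3 : ℝ) ^ c) / (20 * β)) * (d : ℝ)) ^ (1 / c))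
    (hbd : (((outerBoundary G W).card : ℝ)) ≤ (d : ℝ) / 4)
    (N : Finset (List Bool)) (L : List Bool → Finset V)
    (hroot : ([] : List Bool) ∈ N) (hrootL : L [] = W)
    (hclosed : ∀ (l : List Bool) (b : Bool), l ++ [b] ∈ N →
      l ∈ N ∧ l ++ [true] ∈ N ∧ l ++ [false] ∈ N)
    (hchild : ∀ l : List Bool, l ++ [true] ∈ N →
      Disjoint (L (l ++ [false])) (L (l ++ [true])) ∧
      Disconn G (L (l ++ [false])) (L (l ++ [true])) ∧
      L (l ++ [false]) ⊆ L l ∧ L (l ++ [true]) ⊆ L l ∧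
      3 * (L (l ++ [false])).card ≤ 2 * (L l).card ∧
      3 * (L (l ++ [true])).card ≤ 2 * (L l).card ∧
      (((L l \ (L (l ++ [false]) ∪ L (l ++ [true]))).card : ℝ) ≤
        β * ((L l).card : ℝ) ^ c)) :
    ∀ l ∈ N,
      (((outerBoundary G (L l)).card : ℝ) ≤
        (d : ℝ) / 4 + β * ((W.card : ℝ)) ^ c / (1 - (2 / 3 : ℝ) ^ c)) ∧
      ((d : ℝ) / 4 + β * ((W.card : ℝ)) ^ c / (1 - (2 / 3 : ℝ) ^ c) < (d : ℝ) / 3) := by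
  classical
  set r : ℝ := (2/3 : ℝ) ^ c with hr_def
  have hβ0 : (0:ℝ) < β := lt_of_lt_of_le one_pos hβ
  have hr0 : 0 < r := Real.rpow_pos_of_pos (by norm_num) c
  have hr1 : r < 1 := Real.rpow_lt_one (by norm_num) (by norm_num) hc0
  have h1r : (0:ℝ) < 1 - r := by linarith
  have hd0 : (0:ℝ) < (d:ℝ) := by exact_mod_cast Nat.lt_of_lt_of_le Nat.zero_lt_one hd
  -- bound on W.card ^ c
  have hWc : ((W.card : ℝ)) ^ c ≤ (1 - r) / (20 * β) * (d:ℝ) := by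
    have hx : (0:ℝ) ≤ (1 - r) / (20 * β) * (d:ℝ) := by positivity
    calc ((W.card : ℝ)) ^ c
        ≤ (((1 - r) / (20 * β) * (d:ℝ)) ^ (1/c)) ^ c := by
          exact Real.rpow_le_rpow (Nat.cast_nonneg _) hW hc0.le
      _ = (1 - r) / (20 * β) * (d:ℝ) := by
          rw [← Real.rpow_mul hx, one_div, inv_mul_cancel₀ hc0.ne', Real.rpow_one]
  have hnum : (d : ℝ) / 4 + β * ((W.card : ℝ)) ^ c / (1 - r) < (d : ℝ) / 3 := by
    have h2 : β * ((W.card : ℝ)) ^ c / (1 - r) ≤ (d:ℝ) / 20 := by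
      rw [div_le_iff₀ h1r]
      have : β * ((W.card : ℝ)) ^ c ≤ β * ((1 - r) / (20 * β) * (d:ℝ)) :=
        mul_le_mul_of_nonneg_left hWc hβ0.le
      calc β * ((W.card : ℝ)) ^ c ≤ β * ((1 - r) / (20 * β) * (d:ℝ)) := this
        _ = (d:ℝ) / 20 * (1 - r) := by field_simp
    linarith
  -- geometric sum bound
  have hgeom : ∀ n : ℕ, ∑ k ∈ Finset.range n, r ^ k ≤ 1 / (1 - r) := by
    intro n
    rw [geom_sum_eq hr1.ne n]
    have heq : (r ^ n - 1) / (r - 1) = (1 - r ^ n) / (1 - r) := by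
      rw [div_eq_div_iff (by linarith) (by linarith)]; ring
    rw [heq, div_le_div_iff₀ h1r h1r]
    have hrn : (0:ℝ) ≤ r ^ n := pow_nonneg hr0.le n
    nlinarith
  have hWc0 : (0:ℝ) ≤ ((W.card : ℝ)) ^ c := Real.rpow_nonneg (Nat.cast_nonneg _) c
  -- main induction
  have key : ∀ n : ℕ, ∀ l ∈ N, l.length = n →
      ((L l).card : ℝ) ≤ (2/3 : ℝ) ^ n * (W.card : ℝ) ∧
      ((outerBoundary G (L l)).card : ℝ) ≤
        (d : ℝ) / 4 + β * ((W.card : ℝ)) ^ c * ∑ k ∈ Finset.range n, r ^ k := by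
    intro n
    induction n with
    | zero =>
      intro l hl hlen
      rw [List.length_eq_zero_iff] at hlen
      subst hlen
      rw [hrootL]
      simp only [pow_zero, one_mul, Finset.range_zero, Finset.sum_empty, mul_zero, add_zero]
      exact ⟨le_refl _, hbd⟩
    | succ n ih =>
      intro l hl hlen
      have hne : l ≠ [] := by intro h; simp [h] at hlen
      obtain ⟨l', b, rfl⟩ : ∃ l' b, l = l' ++ [b] := by
        refine ⟨l.dropLast, l.getLast hne, ?_⟩
        exact (List.dropLast_append_getLast hne).symm
      have hlen' : l'.length = n := by
        simpa using hlen
      obtain ⟨hl', hlT, hlF⟩ := hclosed l' b hl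
      obtain ⟨hsize', hbd'⟩ := ih l' hl' hlen'
      obtain ⟨hdisj, hdisc, hsubF, hsubT, hcF, hcT, hsep⟩ := hchild l' hlT
      -- child is contained in parent and child size bound
      have hchildcard : 3 * ((L (l' ++ [b])).card : ℝ) ≤ 2 * ((L l').card : ℝ) := by
        cases b
        · exact_mod_cast hcF
        · exact_mod_cast hcT
      have hsz : ((L (l' ++ [b])).card : ℝ) ≤ (2/3 : ℝ) ^ (n+1) * (W.card : ℝ) := by
        have : ((L (l' ++ [b])).card : ℝ) ≤ (2/3 : ℝ) * ((L l').card : ℝ) := by linarith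
        calc ((L (l' ++ [b])).card : ℝ) ≤ (2/3 : ℝ) * ((L l').card : ℝ) := this
          _ ≤ (2/3 : ℝ) * ((2/3 : ℝ) ^ n * (W.card : ℝ)) := by
              apply mul_le_mul_of_nonneg_left hsize' (by norm_num)
          _ = (2/3 : ℝ) ^ (n+1) * (W.card : ℝ) := by ring
      -- boundary subset
      have hsub : outerBoundary G (L (l' ++ [b])) ⊆
          outerBoundary G (L l') ∪ (L l' \ (L (l' ++ [false]) ∪ L (l' ++ [true]))) := by
        intro v hv
        simp only [outerBoundary, Finset.mem_filter, Finset.mem_univ, true_and] at hv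
        obtain ⟨hvn, u, hu, hadj⟩ := hv
        by_cases hv' : v ∈ L l'
        · refine Finset.mem_union_right _ ?_
          rw [Finset.mem_sdiff]
          refine ⟨hv', ?_⟩
          rw [Finset.mem_union]
          rintro (hvF | hvT)
          · cases b with
            | false => exact hvn hvF
            | true => exact hdisc v hvF u hu hadj.symm
          · cases b with
            | false => exact hdisc u hu v hvT hadj
            | true => exact hvn hvT
        · refine Finset.mem_union_left _ ?_
          simp only [outerBoundary, Finset.mem_filter, Finset.mem_univ, true_and]
          have hu' : u ∈ L l' := by
            cases b
            · exact hsubF hu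
            · exact hsubT hu
          exact ⟨hv', u, hu', hadj⟩
      have hcard : ((outerBoundary G (L (l' ++ [b]))).card : ℝ) ≤
          ((outerBoundary G (L l')).card : ℝ) +
          ((L l' \ (L (l' ++ [false]) ∪ L (l' ++ [true]))).card : ℝ) := by
        have := le_trans (Finset.card_le_card hsub) (Finset.card_union_le _ _)
        exact_mod_cast this
      -- separator bound
      have hsepb : β * ((L l').card : ℝ) ^ c ≤ β * ((W.card : ℝ)) ^ c * r ^ n := by
        have h1 : ((L l').card : ℝ) ^ c ≤ ((2/3 : ℝ) ^ n * (W.card : ℝ)) ^ c :=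
          Real.rpow_le_rpow (Nat.cast_nonneg _) hsize' hc0.le
        have h2 : ((2/3 : ℝ) ^ n * (W.card : ℝ)) ^ c = r ^ n * ((W.card : ℝ)) ^ c := by
          rw [Real.mul_rpow (by positivity) (Nat.cast_nonneg _)]
          congr 1
          rw [← Real.rpow_natCast (2/3 : ℝ) n, ← Real.rpow_mul (by norm_num),
            mul_comm, Real.rpow_mul (by norm_num), Real.rpow_natCast]
        rw [h2] at h1
        calc β * ((L l').card : ℝ) ^ c ≤ β * (r ^ n * ((W.card : ℝ)) ^ c) :=
              mul_le_mul_of_nonneg_left h1 hβ0.le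
          _ = β * ((W.card : ℝ)) ^ c * r ^ n := by ring
      refine ⟨hsz, ?_⟩
      calc ((outerBoundary G (L (l' ++ [b]))).card : ℝ)
          ≤ ((outerBoundary G (L l')).card : ℝ) +
            ((L l' \ (L (l' ++ [false]) ∪ L (l' ++ [true]))).card : ℝ) := hcard
        _ ≤ ((d : ℝ) / 4 + β * ((W.card : ℝ)) ^ c * ∑ k ∈ Finset.range n, r ^ k) +
            β * ((L l').card : ℝ) ^ c := add_le_add hbd' hsep
        _ ≤ ((d : ℝ) / 4 + β * ((W.card : ℝ)) ^ c * ∑ k ∈ Finset.range n, r ^ k) +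
            β * ((W.card : ℝ)) ^ c * r ^ n := by linarith
        _ = (d : ℝ) / 4 + β * ((W.card : ℝ)) ^ c * ∑ k ∈ Finset.range (n+1), r ^ k := by
            rw [Finset.sum_range_succ]; ring
  intro l hl
  obtain ⟨_, hbnd⟩ := key l.length l hl rfl
  refine ⟨?_, hnum⟩
  calc ((outerBoundary G (L l)).card : ℝ)
      ≤ (d : ℝ) / 4 + β * ((W.card : ℝ)) ^ c * ∑ k ∈ Finset.range l.length, r ^ k := hbnd
    _ ≤ (d : ℝ) / 4 + β * ((W.card : ℝ)) ^ c * (1 / (1 - r)) := by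
        have := mul_le_mul_of_nonneg_left (hgeom l.length) (by positivity : (0:ℝ) ≤ β * ((W.card : ℝ)) ^ c)
        linarith
    _ = (d : ℝ) / 4 + β * ((W.card : ℝ)) ^ c / (1 - r) := by ring
end
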